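/- arXiv:2312.03937 — 4 statements merged into one kernel-verified Lean document; each statement's English description precedes it below -/
import Mathlib

section
/- Let $D_1$ and $D_2$ be balanced incomplete block designs on the same finite set $V$, with parameters $(v,b_1,r_1,k_1,\lambda_1)$ and $(v,b_2,r_2,k_2,\lambda_2)$ respectively, and let $M = M(D_1,D_2)$ be their mutual incidence matrix. Then every diagonal entry of $M M^T$ equals $k_1(\lambda_2 k_1 - \lambda_2 + r_2)$, i.e. $(MM^T)_{nn} = k_1(\lambda_2 k_1 - \lambda_2 + r_2)$ for all $n = 1,\dots,b_1$. -/
open Finset Matrix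

/-- A balanced incomplete block design with parameters `(v, b, r, k, lam)` on a
finite set (type) `V` of cardinality `v`, given by its family of blocks `B`. -/
structure IsBIBD (V : Type) [Fintype V] [DecidableEq V]
    (v b r k lam : ℕ) (B : Fin b → Finset V) : Prop where
  card_V : Fintype.card V = v
  k_pos : 0 < k
  k_lt_v : k < v
  block_card : ∀ i : Fin b, (B i).card = k
  repl : ∀ x : V, (Finset.univ.filter fun i => x ∈ B i).card = r
  pair : ∀ x y : V, x ≠ y →
    (Finset.univ.filter fun i => x ∈ B i ∧ y ∈ B i).card = lam

/-- The mutual incidence matrix of two block designs, `M i j = |B₁ i ∩ B₂ j|`,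
viewed as a real matrix. -/
def mutualM {V : Type} [DecidableEq V] {b₁ b₂ : ℕ}
    (B₁ : Fin b₁ → Finset V) (B₂ : Fin b₂ → Finset V) :
    Matrix (Fin b₁) (Fin b₂) ℝ :=
  fun i j => ((B₁ i ∩ B₂ j).card : ℝ)

/-- The vector `𝒵_D(x,y) ∈ ℝ^b`: its `j`-th component is `1` if `x ∈ B j` and
`y ∉ B j`, `-1` if `x ∉ B j` and `y ∈ B j`, and `0` otherwise. -/
def Zvec {V : Type} [DecidableEq V] {b : ℕ} (B : Fin b → Finset V) (x y : V) :
    Fin b → ℝ :=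
  fun j => if x ∈ B j ∧ y ∉ B j then 1 else if x ∉ B j ∧ y ∈ B j then -1 else 0

/-- The subspace `V_D = Span{𝒵_D(x,y) : x, y ∈ V} ⊆ ℝ^b`. -/
def Vspan {V : Type} [DecidableEq V] {b : ℕ} (B : Fin b → Finset V) :
    Submodule ℝ (Fin b → ℝ) :=
  Submodule.span ℝ (Set.range fun p : V × V => Zvec B p.1 p.2)

/-- The point-block incidence matrix of a block design, over `ℝ`. -/
def incid {V : Type} [DecidableEq V] {b : ℕ} (B : Fin b → Finset V) :
    Matrix V (Fin b) ℝ :=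
  fun x i => if x ∈ B i then 1 else 0

/-- every diagonal entry of `M Mᵀ` equals `k₁(λ₂ k₁ - λ₂ + r₂)`. -/
theorem stmt4 {V : Type} [Fintype V] [DecidableEq V]
    {v b₁ r₁ k₁ lam₁ b₂ r₂ k₂ lam₂ : ℕ}
    {B₁ : Fin b₁ → Finset V} {B₂ : Fin b₂ → Finset V}
    (hD₁ : IsBIBD V v b₁ r₁ k₁ lam₁ B₁) (hD₂ : IsBIBD V v b₂ r₂ k₂ lam₂ B₂)
    (n : Fin b₁) :
    (mutualM B₁ B₂ * (mutualM B₁ B₂)ᵀ) n n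
      = (k₁ : ℝ) * ((lam₂ : ℝ) * k₁ - lam₂ + r₂) := by
  classical
  have hpair : ∀ x y : V,
      (∑ j : Fin b₂, (if x ∈ B₂ j then (1:ℝ) else 0) * (if y ∈ B₂ j then (1:ℝ) else 0))
        = if x = y then (r₂:ℝ) else (lam₂:ℝ) := by
    intro x y
    have h1 : ∀ j : Fin b₂,
        (if x ∈ B₂ j then (1:ℝ) else 0) * (if y ∈ B₂ j then (1:ℝ) else 0)
          = if x ∈ B₂ j ∧ y ∈ B₂ j then 1 else 0 := by
      intro j; by_cases hx : x ∈ B₂ j <;> by_cases hy : y ∈ B₂ j <;> simp [hx, hy]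
    rw [Finset.sum_congr rfl fun j _ => h1 j, Finset.sum_boole]
    by_cases hxy : x = y
    · subst hxy
      simp only [and_self, if_true]
      rw [hD₂.repl x]
    · rw [if_neg hxy]
      norm_cast
      rw [← hD₂.pair x y hxy]
  have hM : ∀ j : Fin b₂, mutualM B₁ B₂ n j
      = ∑ x ∈ B₁ n, (if x ∈ B₂ j then (1:ℝ) else 0) := by
    intro j
    rw [Finset.sum_boole]
    show ((B₁ n ∩ B₂ j).card : ℝ) = _
    rw [← Finset.filter_mem_eq_inter]
  rw [Matrix.mul_apply]
  simp only [Matrix.transpose_apply]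
  have step1 : ∑ j : Fin b₂, mutualM B₁ B₂ n j * mutualM B₁ B₂ n j
      = ∑ x ∈ B₁ n, ∑ y ∈ B₁ n, (if x = y then (r₂:ℝ) else (lam₂:ℝ)) := by
    have : ∀ j : Fin b₂, mutualM B₁ B₂ n j * mutualM B₁ B₂ n j
        = ∑ x ∈ B₁ n, ∑ y ∈ B₁ n,
            (if x ∈ B₂ j then (1:ℝ) else 0) * (if y ∈ B₂ j then (1:ℝ) else 0) := by
      intro j; rw [hM j, Finset.sum_mul_sum]
    rw [Finset.sum_congr rfl fun j _ => this j, Finset.sum_comm]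
    refine Finset.sum_congr rfl fun x _ => ?_
    rw [Finset.sum_comm]
    refine Finset.sum_congr rfl fun y _ => ?_
    exact hpair x y
  rw [step1]
  have hk : (B₁ n).card = k₁ := hD₁.block_card n
  have hinner : ∀ x ∈ B₁ n,
      (∑ y ∈ B₁ n, (if x = y then (r₂:ℝ) else (lam₂:ℝ)))
        = (r₂:ℝ) + ((k₁:ℝ) - 1) * lam₂ := by
    intro x hx
    rw [← Finset.add_sum_erase _ _ hx, if_pos rfl]
    congr 1
    rw [Finset.sum_congr rfl (fun y hy => if_neg (Finset.ne_of_mem_erase hy).symm),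
      Finset.sum_const, Finset.card_erase_of_mem hx, hk, nsmul_eq_mul]
    have : (0:ℕ) < k₁ := hD₁.k_pos
    push_cast [Nat.cast_sub this]
    ring
  rw [Finset.sum_congr rfl hinner, Finset.sum_const, hk, nsmul_eq_mul]
  ring
end

section
/- Let $D_1$ and $D_2$ be balanced incomplete block designs on the same finite set $V$, with parameters $(v,b_1,r_1,k_1,\lambda_1)$ and $(v,b_2,r_2,k_2,\lambda_2)$ respectively, and let $M = M(D_1,D_2)$ be their mutual incidence matrix, viewed as a real matrix. Then for every pair $x, y \in V$ one has $M^T \mathcal{Z}_{D_1}(x,y) = (r_1 - \lambda_1)\,\mathcal{Z}_{D_2}(x,y)$. -/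
open Finset Matrix

lemma count_pair {V : Type} [Fintype V] [DecidableEq V]
    {v b r k lam : ℕ} {B : Fin b → Finset V}
    (hD : IsBIBD V v b r k lam B) (z x : V) :
    (∑ i : Fin b, (if z ∈ B i then (1:ℝ) else 0) * (if x ∈ B i then 1 else 0))
      = if z = x then (r:ℝ) else (lam:ℝ) := by
  by_cases h : z = x
  · subst h
    rw [if_pos rfl, ← hD.repl z, Finset.card_filter]
    push_cast
    exact Finset.sum_congr rfl fun i _ => by by_cases hz : z ∈ B i <;> simp [hz]
  · rw [if_neg h, ← hD.pair z x h, Finset.card_filter]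
    push_cast
    exact Finset.sum_congr rfl fun i _ => by
      by_cases hz : z ∈ B i <;> by_cases hx : x ∈ B i <;> simp [hz, hx]

/-- `Mᵀ 𝒵_{D₁}(x,y) = (r₁ - λ₁) 𝒵_{D₂}(x,y)` for all `x, y ∈ V`. -/
theorem stmt6 {V : Type} [Fintype V] [DecidableEq V]
    {v b₁ r₁ k₁ lam₁ b₂ r₂ k₂ lam₂ : ℕ}
    {B₁ : Fin b₁ → Finset V} {B₂ : Fin b₂ → Finset V}
    (hD₁ : IsBIBD V v b₁ r₁ k₁ lam₁ B₁) (hD₂ : IsBIBD V v b₂ r₂ k₂ lam₂ B₂)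
    (x y : V) :
    (mutualM B₁ B₂)ᵀ.mulVec (Zvec B₁ x y)
      = ((r₁ : ℝ) - lam₁) • Zvec B₂ x y := by
  funext j
  simp only [Matrix.mulVec, Matrix.transpose_apply, dotProduct, Pi.smul_apply, smul_eq_mul]
  have hZ1 : ∀ i, Zvec B₁ x y i
      = (if x ∈ B₁ i then (1:ℝ) else 0) - (if y ∈ B₁ i then 1 else 0) := fun i => by
    unfold Zvec; by_cases hx : x ∈ B₁ i <;> by_cases hy : y ∈ B₁ i <;> simp [hx, hy]
  have hM : ∀ i, mutualM B₁ B₂ i j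
      = ∑ z ∈ B₂ j, (if z ∈ B₁ i then (1:ℝ) else 0) := fun i => by
    unfold mutualM
    rw [Finset.inter_comm, ← Finset.filter_mem_eq_inter, Finset.card_filter]
    push_cast
    rfl
  calc ∑ i, mutualM B₁ B₂ i j * Zvec B₁ x y i
      = ∑ i, ∑ z ∈ B₂ j,
          ((if z ∈ B₁ i then (1:ℝ) else 0) * (if x ∈ B₁ i then 1 else 0)
           - (if z ∈ B₁ i then (1:ℝ) else 0) * (if y ∈ B₁ i then 1 else 0)) := by
        refine Finset.sum_congr rfl fun i _ => ?_
        rw [hM i, hZ1 i, Finset.sum_mul]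
        exact Finset.sum_congr rfl fun z _ => by ring
    _ = ∑ z ∈ B₂ j,
          ((if z = x then (r₁:ℝ) else (lam₁:ℝ)) - (if z = y then (r₁:ℝ) else (lam₁:ℝ))) := by
        rw [Finset.sum_comm]
        refine Finset.sum_congr rfl fun z _ => ?_
        rw [Finset.sum_sub_distrib, count_pair hD₁ z x, count_pair hD₁ z y]
    _ = ∑ z ∈ B₂ j,
          ((if z = x then ((r₁:ℝ) - lam₁) else 0) - (if z = y then ((r₁:ℝ) - lam₁) else 0)) := by
        refine Finset.sum_congr rfl fun z _ => ?_
        by_cases hx : z = x <;> by_cases hy : z = y <;> subst_vars <;> simp_all <;> ring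
    _ = (if x ∈ B₂ j then ((r₁:ℝ) - lam₁) else 0) - (if y ∈ B₂ j then ((r₁:ℝ) - lam₁) else 0) := by
        rw [Finset.sum_sub_distrib, Finset.sum_ite_eq' (B₂ j) x, Finset.sum_ite_eq' (B₂ j) y]
    _ = ((r₁:ℝ) - lam₁) * Zvec B₂ x y j := by
        unfold Zvec
        by_cases hx : x ∈ B₂ j <;> by_cases hy : y ∈ B₂ j <;> simp [hx, hy]
end

section
/- Let $D_1$ and $D_2$ be balanced incomplete block designs on the same finite set $V$, with parameters $(v,b_1,r_1,k_1,\lambda_1)$ and $(v,b_2,r_2,k_2,\lambda_2)$ respectively, and let $M = M(D_1,D_2)$ be their mutual incidence matrix, viewed as a real matrix. Then for every pair $x, y \in V$ one has $M \mathcal{Z}_{D_2}(x,y) = (r_2 - \lambda_2)\,\mathcal{Z}_{D_1}(x,y)$. -/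
open Finset Matrix

/-- `M 𝒵_{D₂}(x,y) = (r₂ - λ₂) 𝒵_{D₁}(x,y)` for all `x, y ∈ V`. -/
theorem stmt7 {V : Type} [Fintype V] [DecidableEq V]
    {v b₁ r₁ k₁ lam₁ b₂ r₂ k₂ lam₂ : ℕ}
    {B₁ : Fin b₁ → Finset V} {B₂ : Fin b₂ → Finset V}
    (hD₁ : IsBIBD V v b₁ r₁ k₁ lam₁ B₁) (hD₂ : IsBIBD V v b₂ r₂ k₂ lam₂ B₂)
    (x y : V) :
    (mutualM B₁ B₂).mulVec (Zvec B₂ x y)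
      = ((r₂ : ℝ) - lam₂) • Zvec B₁ x y := by
  have hZ : ∀ {b : ℕ} (B : Fin b → Finset V) (j : Fin b),
      Zvec B x y j = (if x ∈ B j then (1:ℝ) else 0) - (if y ∈ B j then 1 else 0) := by
    intro b B j
    unfold Zvec
    by_cases hx : x ∈ B j <;> by_cases hy : y ∈ B j <;> simp [hx, hy]
  have inner : ∀ z w : V,
      ∑ j, (if z ∈ B₂ j then (1:ℝ) else 0) * (if w ∈ B₂ j then 1 else 0)
        = if z = w then (r₂:ℝ) else lam₂ := by
    intro z w
    have h1 : ∑ j, (if z ∈ B₂ j then (1:ℝ) else 0) * (if w ∈ B₂ j then 1 else 0)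
        = ((Finset.univ.filter fun j => z ∈ B₂ j ∧ w ∈ B₂ j).card : ℝ) := by
      rw [Finset.card_filter]
      push_cast
      refine Finset.sum_congr rfl fun j _ => ?_
      by_cases hz : z ∈ B₂ j <;> by_cases hw : w ∈ B₂ j <;> simp [hz, hw]
    rw [h1]
    by_cases hzw : z = w
    · subst hzw
      simp only [and_self, if_pos rfl]
      rw [hD₂.repl z]
      simp
    · rw [hD₂.pair z w hzw]
      simp [hzw]
  funext i
  simp only [Matrix.mulVec, dotProduct, Pi.smul_apply, smul_eq_mul]
  have hM : ∀ j, mutualM B₁ B₂ i j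
      = ∑ z ∈ B₁ i, (if z ∈ B₂ j then (1:ℝ) else 0) := by
    intro j
    unfold mutualM
    rw [Finset.sum_ite_mem]
    simp [Finset.inter_comm]
  calc ∑ j, mutualM B₁ B₂ i j * Zvec B₂ x y j
      = ∑ j, ∑ z ∈ B₁ i, (if z ∈ B₂ j then (1:ℝ) else 0)
          * ((if x ∈ B₂ j then (1:ℝ) else 0) - (if y ∈ B₂ j then 1 else 0)) := by
        refine Finset.sum_congr rfl fun j _ => ?_
        rw [hM j, hZ, Finset.sum_mul]
    _ = ∑ z ∈ B₁ i, ((if z = x then (r₂:ℝ) else lam₂) - (if z = y then (r₂:ℝ) else lam₂)) := by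
        rw [Finset.sum_comm]
        refine Finset.sum_congr rfl fun z _ => ?_
        simp only [mul_sub]
        rw [Finset.sum_sub_distrib, inner z x, inner z y]
    _ = ((r₂:ℝ) - lam₂) * Zvec B₁ x y i := by
        rcases eq_or_ne x y with h | h
        · subst h; simp [hZ B₁ i]
        · have : ∀ z : V, ((if z = x then (r₂:ℝ) else lam₂) - (if z = y then (r₂:ℝ) else lam₂))
              = ((r₂:ℝ) - lam₂) * ((if z = x then (1:ℝ) else 0) - (if z = y then 1 else 0)) := by
            intro z
            by_cases hx : z = x <;> by_cases hy : z = y <;>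
              simp_all [sub_eq_iff_eq_add] <;> ring
          simp only [this, ← Finset.mul_sum]
          congr 1
          rw [Finset.sum_sub_distrib, Finset.sum_ite_eq' (B₁ i) x fun _ => (1:ℝ),
            Finset.sum_ite_eq' (B₁ i) y fun _ => (1:ℝ), hZ B₁ i]
end

section
/- Let $D_1$ and $D_2$ be balanced incomplete block designs on the same finite set $V$, with parameters $(v,b_1,r_1,k_1,\lambda_1)$ and $(v,b_2,r_2,k_2,\lambda_2)$ respectively, and let $M = M(D_1,D_2)$ be their mutual incidence matrix, viewed as a real matrix. Then for every pair $x, y \in V$ one has $M M^T \mathcal{Z}_{D_1}(x,y) = (r_1 - \lambda_1)(r_2 - \lambda_2)\,\mathcal{Z}_{D_1}(x,y)$; in particular, every vector of the subspace $V_{D_1} = \mathrm{Span}\{\mathcal{Z}_{D_1}(x,y) : x,y \in V\} \subseteq \mathbb{R}^{b_1}$ satisfies $MM^T w = (r_1-\lambda_1)(r_2-\lambda_2) w$. -/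
open Finset Matrix

-- aux defs
def dvec {V : Type} [DecidableEq V] (x y : V) : V → ℝ :=
  fun p => (if p = x then 1 else 0) - (if p = y then 1 else 0)

lemma mutualM_eq {V : Type} [Fintype V] [DecidableEq V] {b₁ b₂ : ℕ}
    (B₁ : Fin b₁ → Finset V) (B₂ : Fin b₂ → Finset V) :
    mutualM B₁ B₂ = (incid B₁)ᵀ * incid B₂ := by
  ext i j
  simp only [mutualM, Matrix.mul_apply, Matrix.transpose_apply, incid]
  have h : B₁ i ∩ B₂ j = Finset.univ.filter (fun x => x ∈ B₁ i ∧ x ∈ B₂ j) := by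
    ext p; simp [Finset.mem_inter]
  rw [h, Finset.card_filter]
  push_cast
  apply Finset.sum_congr rfl
  intro p _
  by_cases h1 : p ∈ B₁ i <;> by_cases h2 : p ∈ B₂ j <;> simp [h1, h2]

lemma incid_mul_t {V : Type} [Fintype V] [DecidableEq V]
    {v b r k lam : ℕ} {B : Fin b → Finset V} (hD : IsBIBD V v b r k lam B)
    (p q : V) :
    (incid B * (incid B)ᵀ) p q = if p = q then (r : ℝ) else (lam : ℝ) := by
  simp only [Matrix.mul_apply, Matrix.transpose_apply, incid]
  rcases eq_or_ne p q with rfl | h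
  · rw [if_pos rfl, ← hD.repl p, Finset.card_filter]
    push_cast
    apply Finset.sum_congr rfl
    intro j _
    by_cases hj : p ∈ B j <;> simp [hj]
  · rw [if_neg h, ← hD.pair p q h, Finset.card_filter]
    push_cast
    apply Finset.sum_congr rfl
    intro j _
    by_cases h1 : p ∈ B j <;> by_cases h2 : q ∈ B j <;> simp [h1, h2]

lemma Zvec_eq {V : Type} [Fintype V] [DecidableEq V] {b : ℕ}
    (B : Fin b → Finset V) (x y : V) :
    Zvec B x y = (incid B)ᵀ.mulVec (dvec x y) := by
  ext j
  simp only [Zvec, Matrix.mulVec, Matrix.transpose_apply, incid, dvec, dotProduct]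
  have : ∀ p : V, (if p ∈ B j then (1:ℝ) else 0) *
      ((if p = x then (1:ℝ) else 0) - (if p = y then 1 else 0))
      = (if p = x then (if p ∈ B j then (1:ℝ) else 0) else 0)
        - (if p = y then (if p ∈ B j then (1:ℝ) else 0) else 0) := by
    intro p
    by_cases h1 : p = x <;> by_cases h2 : p = y <;> simp [h1, h2, mul_sub]
  rw [Finset.sum_congr rfl (fun p _ => this p), Finset.sum_sub_distrib,
    Finset.sum_ite_eq' Finset.univ x, Finset.sum_ite_eq' Finset.univ y]
  simp only [Finset.mem_univ, if_true]
  by_cases h1 : x ∈ B j <;> by_cases h2 : y ∈ B j <;> simp [h1, h2]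

lemma eigen_d {V : Type} [Fintype V] [DecidableEq V]
    {v b r k lam : ℕ} {B : Fin b → Finset V} (hD : IsBIBD V v b r k lam B)
    (x y : V) :
    (incid B * (incid B)ᵀ).mulVec (dvec x y) = ((r : ℝ) - lam) • dvec x y := by
  ext p
  simp only [Matrix.mulVec, dotProduct]
  rw [Finset.sum_congr rfl (fun q _ => by rw [incid_mul_t hD p q])]
  have : ∀ q : V, (if p = q then (r:ℝ) else lam) * dvec x y q
      = (if q = x then (if p = q then (r:ℝ) else lam) else 0)
        - (if q = y then (if p = q then (r:ℝ) else lam) else 0) := by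
    intro q
    simp only [dvec]
    by_cases h1 : q = x <;> by_cases h2 : q = y <;> simp [h1, h2, mul_sub]
  rw [Finset.sum_congr rfl (fun q _ => this q), Finset.sum_sub_distrib,
    Finset.sum_ite_eq' Finset.univ x, Finset.sum_ite_eq' Finset.univ y]
  simp only [Finset.mem_univ, if_true, Pi.smul_apply, dvec, smul_eq_mul]
  by_cases h1 : p = x <;> by_cases h2 : p = y <;> subst_vars <;> simp_all


/-- `M Mᵀ 𝒵_{D₁}(x,y) = (r₁-λ₁)(r₂-λ₂) 𝒵_{D₁}(x,y)` for all
`x, y ∈ V`; in particular every `w ∈ V_{D₁}` satisfies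
`M Mᵀ w = (r₁-λ₁)(r₂-λ₂) w`. -/
theorem stmt8 {V : Type} [Fintype V] [DecidableEq V]
    {v b₁ r₁ k₁ lam₁ b₂ r₂ k₂ lam₂ : ℕ}
    {B₁ : Fin b₁ → Finset V} {B₂ : Fin b₂ → Finset V}
    (hD₁ : IsBIBD V v b₁ r₁ k₁ lam₁ B₁) (hD₂ : IsBIBD V v b₂ r₂ k₂ lam₂ B₂) :
    (∀ x y : V,
      (mutualM B₁ B₂ * (mutualM B₁ B₂)ᵀ).mulVec (Zvec B₁ x y)
        = (((r₁ : ℝ) - lam₁) * ((r₂ : ℝ) - lam₂)) • Zvec B₁ x y) ∧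
    (∀ w ∈ Vspan B₁,
      (mutualM B₁ B₂ * (mutualM B₁ B₂)ᵀ).mulVec w
        = (((r₁ : ℝ) - lam₁) * ((r₂ : ℝ) - lam₂)) • w) := by
  have key : ∀ x y : V,
      (mutualM B₁ B₂ * (mutualM B₁ B₂)ᵀ).mulVec (Zvec B₁ x y)
        = (((r₁ : ℝ) - lam₁) * ((r₂ : ℝ) - lam₂)) • Zvec B₁ x y := by
    intro x y
    set N₁ := incid B₁
    set N₂ := incid B₂
    have h1 : N₁.mulVec (N₁ᵀ.mulVec (dvec x y))
        = ((r₁ : ℝ) - lam₁) • dvec x y := by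
      rw [Matrix.mulVec_mulVec]; exact eigen_d hD₁ x y
    have h2 : N₂.mulVec (N₂ᵀ.mulVec (dvec x y))
        = ((r₂ : ℝ) - lam₂) • dvec x y := by
      rw [Matrix.mulVec_mulVec]; exact eigen_d hD₂ x y
    rw [mutualM_eq, Matrix.transpose_mul, Matrix.transpose_transpose,
      Zvec_eq B₁ x y, ← Matrix.mulVec_mulVec, ← Matrix.mulVec_mulVec,
      ← Matrix.mulVec_mulVec, h1, Matrix.mulVec_smul, Matrix.mulVec_smul, h2,
      Matrix.mulVec_smul, Matrix.mulVec_smul, smul_smul]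
  refine ⟨key, ?_⟩
  intro w hw
  induction hw using Submodule.span_induction with
  | mem w hw => obtain ⟨⟨x, y⟩, rfl⟩ := hw; exact key x y
  | zero => simp
  | add a b _ _ ha hb => rw [Matrix.mulVec_add, ha, hb, smul_add]
  | smul c a _ ha => rw [Matrix.mulVec_smul, ha, smul_comm]
end
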